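/- For all J > 0 and h ∈ ℝ, every maximizer m* of the function m ↦ p̃(m,h,J) = −J m² + J/2 + p((2m−1)J + h) over ℝ lies in the open interval (0,1) and satisfies the consistency equation m* = g((2m*−1)J + h), where p′ = g and g(ξ) = (√(e^{4ξ}+4e^{2ξ}) − e^{2ξ})/2. -/

import Mathlib

noncomputable def gH (h : ℝ) : ℝ :=
  (Real.sqrt (Real.exp (4 * h) + 4 * Real.exp (2 * h)) - Real.exp (2 * h)) / 2

noncomputable def pH (h : ℝ) : ℝ :=
  -(1 - gH h) / 2 - (1 / 2) * Real.log (1 - gH h)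

/-- The variational functional `p̃(m,h,J) = −J m² + J/2 + p((2m−1)J + h)`. -/
noncomputable def pTilde (m h J : ℝ) : ℝ :=
  -J * m ^ 2 + J / 2 + pH ((2 * m - 1) * J + h)

/-!
`g(h)` is the root in `(0,1)` of `g² = e^{2h}(1 − g)`, so it inverts `k(t) = log t − ½ log(1 − t)`
on `(0,1)`. Writing `p = q ∘ g` with `q(t) = −(1 − t)/2 − ½ log(1 − t)`, one has `q'(t) = t k'(t)`,
hence `p' = q'(g) / k'(g) = g`. A maximizer of `p̃` is a critical point, and
`∂ₘ p̃ = 2J (g((2m − 1)J + h) − m)`.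
-/

open Real

/-- The inverse of `gH` on `(0,1)`. -/
noncomputable def gHInv (t : ℝ) : ℝ :=
  log t - log (1 - t) / 2

noncomputable def gHInvDeriv (t : ℝ) : ℝ :=
  1 / t + 1 / (2 * (1 - t))

/-- `pH = pOfG ∘ gH`. -/
noncomputable def pOfG (t : ℝ) : ℝ :=
  -(1 - t) / 2 - (1 / 2) * log (1 - t)

lemma exp_four_mul_eq_sq (x : ℝ) : exp (4 * x) = exp (2 * x) ^ 2 := by
  rw [← exp_nat_mul]; ring_nf

lemma gH_pos (x : ℝ) : 0 < gH x := by
  have : exp (2 * x) < √(exp (4 * x) + 4 * exp (2 * x)) := by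
    rw [lt_sqrt (exp_nonneg _), exp_four_mul_eq_sq]
    nlinarith [exp_pos (2 * x)]
  unfold gH; linarith

lemma gH_lt_one (x : ℝ) : gH x < 1 := by
  have : √(exp (4 * x) + 4 * exp (2 * x)) < exp (2 * x) + 2 := by
    rw [sqrt_lt' (by positivity), exp_four_mul_eq_sq]
    nlinarith
  unfold gH; linarith

lemma gH_sq (x : ℝ) : gH x ^ 2 = exp (2 * x) * (1 - gH x) := by
  have hs : √(exp (4 * x) + 4 * exp (2 * x)) ^ 2 = exp (4 * x) + 4 * exp (2 * x) :=
    sq_sqrt (by positivity)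
  rw [show √(exp (4 * x) + 4 * exp (2 * x)) = 2 * gH x + exp (2 * x) by unfold gH; ring,
    exp_four_mul_eq_sq] at hs
  linear_combination hs / 4

lemma gHInv_gH (x : ℝ) : gHInv (gH x) = x := by
  have h1 : 0 < 1 - gH x := sub_pos.mpr (gH_lt_one x)
  have hlog : log (gH x ^ 2) = log (exp (2 * x) * (1 - gH x)) := by rw [gH_sq]
  rw [log_pow, log_mul (exp_pos _).ne' h1.ne', log_exp] at hlog
  push_cast at hlog
  unfold gHInv; linarith

lemma continuous_gH : Continuous gH := by
  unfold gH; fun_prop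

lemma hasDerivAt_log_one_sub {t : ℝ} (h1 : t < 1) :
    HasDerivAt (fun s => log (1 - s)) (-1 / (1 - t)) t :=
  ((hasDerivAt_id' t).const_sub 1).log (sub_pos.mpr h1).ne'

lemma gHInvDeriv_pos {t : ℝ} (h0 : 0 < t) (h1 : t < 1) : 0 < gHInvDeriv t := by
  have : 0 < 1 - t := sub_pos.mpr h1
  unfold gHInvDeriv
  positivity

lemma hasDerivAt_gHInv {t : ℝ} (h0 : 0 < t) (h1 : t < 1) :
    HasDerivAt gHInv (gHInvDeriv t) t := by
  have h1' : 1 - t ≠ 0 := (sub_pos.mpr h1).ne'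
  refine ((hasDerivAt_log h0.ne').sub ((hasDerivAt_log_one_sub h1).div_const 2)).congr_deriv ?_
  unfold gHInvDeriv
  field_simp
  ring

lemma hasDerivAt_pOfG {t : ℝ} (h0 : 0 < t) (h1 : t < 1) :
    HasDerivAt pOfG (t * gHInvDeriv t) t := by
  have h1' : 1 - t ≠ 0 := (sub_pos.mpr h1).ne'
  have h0' : t ≠ 0 := h0.ne'
  refine ((((hasDerivAt_id' t).const_sub 1).neg.div_const 2).sub
    ((hasDerivAt_log_one_sub h1).const_mul (1 / 2))).congr_deriv ?_
  unfold gHInvDeriv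
  field_simp
  ring

lemma hasDerivAt_gH (x : ℝ) :
    HasDerivAt gH (gHInvDeriv (gH x))⁻¹ x :=
  (hasDerivAt_gHInv (gH_pos x) (gH_lt_one x)).of_local_left_inverse
    continuous_gH.continuousAt (gHInvDeriv_pos (gH_pos x) (gH_lt_one x)).ne'
    (Filter.Eventually.of_forall gHInv_gH)

lemma hasDerivAt_pH (x : ℝ) : HasDerivAt pH (gH x) x :=
  ((hasDerivAt_pOfG (gH_pos x) (gH_lt_one x)).comp x (hasDerivAt_gH x)).congr_deriv
    (mul_inv_cancel_right₀ (gHInvDeriv_pos (gH_pos x) (gH_lt_one x)).ne' _)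

lemma eq_of_isLocalMax_of_hasDerivAt {P : ℝ → ℝ} {P' h J m : ℝ} (hJ : J ≠ 0)
    (hP : HasDerivAt P P' ((2 * m - 1) * J + h))
    (hmax : IsLocalMax (fun m' => -J * m' ^ 2 + J / 2 + P ((2 * m' - 1) * J + h)) m) :
    m = P' := by
  have hinner : HasDerivAt (fun m' => (2 * m' - 1) * J + h) (2 * J) m := by
    simpa using ((((hasDerivAt_id m).const_mul 2).sub_const 1).mul_const J).add_const h
  have hcrit := hmax.hasDerivAt_eq_zero
    ((((hasDerivAt_pow 2 m).const_mul (-J)).add_const (J / 2)).add (hP.comp m hinner))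
  have : 2 * J * (P' - m) = 0 := by linear_combination hcrit
  linarith [(mul_eq_zero.mp this).resolve_left (mul_ne_zero two_ne_zero hJ)]

/-- for `J > 0` and `h ∈ ℝ`, every maximizer of `m ↦ p̃(m,h,J)` over `ℝ`
lies in `(0,1)` and satisfies the consistency equation `m = g((2m−1)J + h)`. -/
theorem stmt14 (h J : ℝ) (hJ : 0 < J) (m : ℝ)
    (hm : ∀ m' : ℝ, pTilde m' h J ≤ pTilde m h J) :
    m ∈ Set.Ioo (0 : ℝ) 1 ∧ m = gH ((2 * m - 1) * J + h) := by
  have hfix : m = gH ((2 * m - 1) * J + h) :=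
    eq_of_isLocalMax_of_hasDerivAt hJ.ne' (hasDerivAt_pH _) (Filter.Eventually.of_forall hm)
  exact ⟨hfix ▸ ⟨gH_pos _, gH_lt_one _⟩, hfix⟩
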